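/- Let n ≥ 1. The permutohedron P_n ⊆ ℝ^n is a generalized permutohedron: for every edge [x,y] of P_n there exist indices i ≠ j and a scalar c ∈ ℝ with y - x = c • (e_i - e_j). -/

import Mathlib

/-!
The endpoints of an edge `[x, y]` of `Pₙ` are extreme points, hence vertices `σ + 1` and `τ + 1`
with `σ ≠ τ`, so some pair `i, j` is ordered one way by `σ` and the other way by `τ`.
Transposing `i` and `j` moves `x` forwards and `y` backwards along `eᵢ - eⱼ` inside `Pₙ`.
Moving both ends by the same small amount keeps the midpoint of the edge, so, the edge being a
face, the moved points lie on it; hence `y - x` is a multiple of `eᵢ - eⱼ`.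
-/

section Segment

variable {𝕜 E : Type*} [Field 𝕜] [LinearOrder 𝕜] [IsStrictOrderedRing 𝕜] [AddCommGroup E]
  [Module 𝕜 E]

theorem left_mem_extremePoints_segment (x y : E) : x ∈ (segment 𝕜 x y).extremePoints 𝕜 := by
  refine ⟨left_mem_segment 𝕜 x y, ?_⟩
  rw [segment_eq_image']
  rintro _ ⟨p, hp, rfl⟩ _ ⟨q, hq, rfl⟩ ⟨s, t, hs, ht, hst, h⟩
  have hcomb : (s * p + t * q) • (y - x) = 0 := by
    linear_combination (norm := module) h - hst • x
  rcases smul_eq_zero.1 hcomb with hsum | hyx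
  · have hp0 : p = 0 := by nlinarith [hp.1, hq.1, mul_nonneg ht.le hq.1]
    simp [hp0]
  · simp [hyx]

theorem right_mem_extremePoints_segment (x y : E) : y ∈ (segment 𝕜 x y).extremePoints 𝕜 :=
  segment_symm 𝕜 y x ▸ left_mem_extremePoints_segment y x

theorem IsExtreme.left_mem_extremePoints {A : Set E} {x y : E}
    (h : IsExtreme 𝕜 A (segment 𝕜 x y)) : x ∈ A.extremePoints 𝕜 :=
  h.extremePoints_subset_extremePoints (left_mem_extremePoints_segment x y)

theorem IsExtreme.right_mem_extremePoints {A : Set E} {x y : E}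
    (h : IsExtreme 𝕜 A (segment 𝕜 x y)) : y ∈ A.extremePoints 𝕜 :=
  h.extremePoints_subset_extremePoints (right_mem_extremePoints_segment x y)

theorem Convex.add_smul_mem_of_le {s : Set E} (hs : Convex 𝕜 s) {x d : E} {a t : 𝕜}
    (hx : x ∈ s) (hxa : x + a • d ∈ s) (ht : 0 ≤ t) (hta : t ≤ a) : x + t • d ∈ s := by
  obtain rfl | ha := (ht.trans hta).eq_or_lt
  · simpa [le_antisymm hta ht] using hx
  simpa [smul_smul, div_mul_cancel₀ t ha.ne'] using
    hs.add_smul_mem hx hxa ⟨div_nonneg ht ha.le, div_le_one_of_le₀ hta ha.le⟩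

theorem IsExtreme.exists_sub_eq_smul_of_add_smul_mem {P : Set E} (hP : Convex 𝕜 P)
    {x y d : E} (hd : d ≠ 0) (hedge : IsExtreme 𝕜 P (segment 𝕜 x y)) {a b : 𝕜}
    (ha : 0 < a) (hb : b < 0) (hxa : x + a • d ∈ P) (hyb : y + b • d ∈ P) :
    ∃ c : 𝕜, y - x = c • d := by
  set ε := min a (-b)
  have hε : 0 < ε := lt_min ha (neg_pos.2 hb)
  have hu : x + ε • d ∈ P :=
    hP.add_smul_mem_of_le (hedge.1 (left_mem_segment 𝕜 x y)) hxa hε.le (min_le_left _ _)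
  have hv : y + ε • -d ∈ P :=
    hP.add_smul_mem_of_le (hedge.1 (right_mem_segment 𝕜 x y)) (by rwa [neg_smul_neg])
      hε.le (min_le_right _ _)
  have hmid_open : (1 / 2 : 𝕜) • x + (1 / 2 : 𝕜) • y ∈ openSegment 𝕜 (x + ε • d) (y + ε • -d) :=
    ⟨1 / 2, 1 / 2, by norm_num, by norm_num, by norm_num, by module⟩
  have hmid_seg : (1 / 2 : 𝕜) • x + (1 / 2 : 𝕜) • y ∈ segment 𝕜 x y :=
    ⟨1 / 2, 1 / 2, by norm_num, by norm_num, by norm_num, rfl⟩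
  obtain ⟨q, -, hq⟩ := segment_eq_image' 𝕜 x y ▸ hedge.2 hu hv hmid_seg hmid_open
  have hqε : q • (y - x) = ε • d := add_left_cancel hq
  have hq0 : q ≠ 0 := by
    rintro rfl
    exact smul_ne_zero hε.ne' hd (hqε ▸ zero_smul 𝕜 _)
  exact ⟨q⁻¹ * ε, by rw [mul_smul, ← hqε, inv_smul_smul₀ hq0]⟩

end Segment

theorem Equiv.Perm.exists_lt_and_lt_of_ne {α : Type*} [LinearOrder α] [WellFoundedLT α]
    {σ τ : Equiv.Perm α} (h : σ ≠ τ) : ∃ i j, σ i < σ j ∧ τ j < τ i := by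
  by_contra! hmono
  have hπ : StrictMono (σ.symm.trans τ) := fun k l hkl =>
    (hmono _ _ (by simpa using hkl)).lt_of_ne ((σ.symm.trans τ).injective.ne hkl.ne)
  have hid : ∀ k, τ (σ.symm k) = k := fun k =>
    DFunLike.congr_fun (Subsingleton.elim (hπ.orderIsoOfSurjective _ (Equiv.surjective _))
      (OrderIso.refl α)) k
  exact h (Equiv.ext fun i => by simpa using (hid (σ i)).symm)

theorem comp_swap_eq_add_smul_single_sub_single {ι R : Type*} [DecidableEq ι] [Ring R]
    (x : ι → R) {i j : ι} (hij : i ≠ j) :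
    x ∘ Equiv.swap i j = x + (x j - x i) • (Pi.single i 1 - Pi.single j 1) := by
  ext k
  rcases eq_or_ne k i with rfl | hki
  · simp [hij]
  rcases eq_or_ne k j with rfl | hkj
  · simp [hki]
  simp [Equiv.swap_apply_of_ne_of_ne hki hkj, hki, hkj]

theorem permutohedron_is_generalized_permutohedron_general
    (n : ℕ)
    (P : Set (Fin n → ℝ))
    (hP : P = convexHull ℝ
      {x : Fin n → ℝ | ∃ σ : Equiv.Perm (Fin n), x = fun i => ((σ i : ℕ) : ℝ) + 1})
    (x y : Fin n → ℝ) (hxy : x ≠ y) (hedge : IsExtreme ℝ P (segment ℝ x y)) :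
    ∃ i j : Fin n, i ≠ j ∧ ∃ c : ℝ,
      y - x = c • ((Pi.single i 1 : Fin n → ℝ) - Pi.single j 1) := by
  set V := {x : Fin n → ℝ | ∃ σ : Equiv.Perm (Fin n), x = fun i => ((σ i : ℕ) : ℝ) + 1}
  subst hP
  have hxV : x ∈ V := extremePoints_convexHull_subset hedge.left_mem_extremePoints
  have hyV : y ∈ V := extremePoints_convexHull_subset hedge.right_mem_extremePoints
  obtain ⟨σ, hσ⟩ := hxV
  obtain ⟨τ, hτ⟩ := hyV
  obtain ⟨i, j, hσij, hτij⟩ := Equiv.Perm.exists_lt_and_lt_of_ne (σ := σ) (τ := τ) <| by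
    rintro rfl; exact hxy (hσ.trans hτ.symm)
  have hij : i ≠ j := ne_of_apply_ne σ hσij.ne
  have hmove : ∀ z ∈ V, z + (z j - z i) • ((Pi.single i 1 : Fin n → ℝ) - Pi.single j 1) ∈
      convexHull ℝ V := by
    rintro _ ⟨ρ, rfl⟩
    rw [← comp_swap_eq_add_smul_single_sub_single _ hij]
    exact subset_convexHull ℝ V ⟨(Equiv.swap i j).trans ρ, rfl⟩
  refine ⟨i, j, hij, hedge.exists_sub_eq_smul_of_add_smul_mem (convex_convexHull ℝ V) ?_ ?_ ?_
    (hmove x ⟨σ, hσ⟩) (hmove y ⟨τ, hτ⟩)⟩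
  · rw [sub_ne_zero]
    exact fun h => one_ne_zero (α := ℝ) (by simpa [hij] using congr_fun h i)
  · simpa [hσ] using hσij
  · simpa [hτ] using hτij

/-- The permutohedron `Pₙ ⊆ ℝⁿ` is a generalized permutohedron: for
every edge `[x,y]` there are indices `i ≠ j` and a scalar `c` with
`y - x = c • (e_i - e_j)`. -/
theorem permutohedron_is_generalized_permutohedron
    (n : ℕ) (hn : 1 ≤ n)
    (P : Set (Fin n → ℝ))
    (hP : P = convexHull ℝ
      {x : Fin n → ℝ | ∃ σ : Equiv.Perm (Fin n), x = fun i => ((σ i : ℕ) : ℝ) + 1})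
    (x y : Fin n → ℝ) (hxy : x ≠ y) (hedge : IsExtreme ℝ P (segment ℝ x y)) :
    ∃ i j : Fin n, i ≠ j ∧ ∃ c : ℝ,
      y - x = c • ((Pi.single i 1 : Fin n → ℝ) - Pi.single j 1) :=
  permutohedron_is_generalized_permutohedron_general n P hP x y hxy hedge
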